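/- For every positive integer n, g⁻¹(n) = ∑_{d∣n} μ(n/d) · λ(d) · C_Ω(d). -/

import Mathlib

/-- `C_Ω(n) = Ω(n)! / (α₁! ⋯ α_r!)` is the multinomial coefficient of the exponents in the
prime factorization `n = p₁^{α₁} ⋯ p_r^{α_r}`; by convention `C_Ω(1) = 1`. -/
noncomputable def COmega (n : ℕ) : ℝ :=
  ((ArithmeticFunction.cardFactors n).factorial : ℝ) /
    ∏ p ∈ n.primeFactors, ((n.factorization p).factorial : ℝ)

/-!
Write `P` for the indicator function of the primes. Since `ω = ζ * P`, we have
`g = ζ * (1 + P)`, so `g⁻¹ = μ * (1 + P)⁻¹` and it suffices to show that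
`(1 + P)⁻¹ = λ · C_Ω`. That is the recursion `∑_{p ∣ n} C_Ω(n / p) = C_Ω(n)` for `n > 1`, which
is Pascal's rule for multinomial coefficients (`C_Ω(n)` counts the orderings of the prime factors
of `n`; sort them by their first entry). Multiplied by `Ω(n)`, its `p`-th term is
`C_Ω(n / p) · Ω(n) = α_p · C_Ω(n)`, and `∑_p α_p = Ω(n)`.
-/

open ArithmeticFunction Finset
open scoped Nat ArithmeticFunction.zeta ArithmeticFunction.Moebius ArithmeticFunction.Omega
  ArithmeticFunction.omega

theorem mul_prod_factorial_update_pred {α : Type*} [DecidableEq α] {s : Finset α} {f : α → ℕ}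
    {a : α} (ha : a ∈ s) (hfa : f a ≠ 0) :
    f a * ∏ q ∈ s, (Function.update f a (f a - 1) q)! = ∏ q ∈ s, (f q)! := by
  rw [← mul_prod_erase s _ ha, ← mul_prod_erase s _ ha, Function.update_self, ← mul_assoc,
    Nat.mul_factorial_pred hfa]
  congr 1
  exact prod_congr rfl fun q hq => by rw [Function.update_of_ne (ne_of_mem_erase hq)]

lemma div_ne_zero_of_mem_primeFactors {n p : ℕ} (hp : p ∈ n.primeFactors) : n / p ≠ 0 :=
  (Nat.div_pos (Nat.le_of_mem_primeFactors hp) (Nat.pos_of_mem_primeFactors hp)).ne'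

lemma divisors_filter_prime (n : ℕ) : n.divisors.filter Nat.Prime = n.primeFactors := by
  ext p
  simp only [mem_filter, Nat.mem_divisors, Nat.mem_primeFactors]
  tauto

lemma cardFactors_div_add_one {n p : ℕ} (hp : p ∈ n.primeFactors) : Ω (n / p) + 1 = Ω n := by
  have hpp := Nat.prime_of_mem_primeFactors hp
  rw [← cardFactors_apply_prime hpp, ← cardFactors_mul (div_ne_zero_of_mem_primeFactors hp)
    hpp.ne_zero, Nat.div_mul_cancel (Nat.dvd_of_mem_primeFactors hp)]

lemma coe_factorization_div_prime {n p : ℕ} (hp : p ∈ n.primeFactors) :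
    ⇑(n / p).factorization = Function.update n.factorization p (n.factorization p - 1) := by
  ext q
  rw [Nat.factorization_div (Nat.dvd_of_mem_primeFactors hp),
    (Nat.prime_of_mem_primeFactors hp).factorization, Finsupp.tsub_apply]
  rcases eq_or_ne q p with rfl | hqp
  · simp
  · simp [hqp]

lemma COmega_eq_of_primeFactors_subset {n : ℕ} {s : Finset ℕ} (h : n.primeFactors ⊆ s) :
    COmega n = (Ω n)! / ∏ p ∈ s, ((n.factorization p)! : ℝ) := by
  rw [COmega, prod_subset h fun q _ hq => ?_]
  rw [← Nat.support_factorization, Finsupp.notMem_support_iff] at hq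
  simp [hq]

lemma COmega_one : COmega 1 = 1 := by simp [COmega]

lemma COmega_div_prime_mul_cardFactors {n p : ℕ} (hp : p ∈ n.primeFactors) :
    COmega (n / p) * Ω n = n.factorization p * COmega n := by
  have hαp : n.factorization p ≠ 0 := by
    rwa [← Finsupp.mem_support_iff, Nat.support_factorization]
  have hΩ := cardFactors_div_add_one hp
  rw [COmega_eq_of_primeFactors_subset (Nat.primeFactors_mono
      (Nat.div_dvd_of_dvd (Nat.dvd_of_mem_primeFactors hp)) (Nat.mem_primeFactors.mp hp).2.2),
    coe_factorization_div_prime hp, COmega, ← hΩ, Nat.factorial_succ,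
    ← Nat.cast_prod (R := ℝ) (s := n.primeFactors) (f := fun q => (n.factorization q)!),
    ← mul_prod_factorial_update_pred hp hαp]
  push_cast
  field_simp

lemma sum_COmega_div_prime {n : ℕ} (hn : 1 < n) :
    ∑ p ∈ n.primeFactors, COmega (n / p) = COmega n := by
  have hΩ : (Ω n : ℝ) ≠ 0 := by exact_mod_cast (cardFactors_pos_iff_one_lt.mpr hn).ne'
  apply mul_right_cancel₀ hΩ
  rw [sum_mul, sum_congr rfl fun p hp => COmega_div_prime_mul_cardFactors hp, ← sum_mul,
    cardFactors_eq_sum_factorization, Finsupp.sum, Nat.support_factorization]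
  push_cast
  ring

section PrimeIndicator

variable (R : Type*)

def primeIndicator [Zero R] [One R] : ArithmeticFunction R :=
  ⟨fun n => if n.Prime then 1 else 0, if_neg Nat.not_prime_zero⟩

variable {R}

lemma primeIndicator_mul_apply [Semiring R] (f : ArithmeticFunction R) (n : ℕ) :
    (primeIndicator R * f) n = ∑ p ∈ n.primeFactors, f (n / p) := by
  rw [mul_apply, Nat.sum_divisorsAntidiagonal (f := fun d e => primeIndicator R d * f e),
    ← divisors_filter_prime, sum_filter]
  refine sum_congr rfl fun d _ => ?_
  simp only [primeIndicator, coe_mk]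
  split_ifs <;> simp

lemma natCoe_cardDistinctFactors [Semiring R] :
    ((ω : ArithmeticFunction ℕ) : ArithmeticFunction R) = ζ * primeIndicator R := by
  ext n
  rw [coe_zeta_mul_comm, primeIndicator_mul_apply, natCoe_apply, cardDistinctFactors_apply,
    ← List.card_toFinset]
  change ((#n.primeFactors : ℕ) : R) = _
  rw [card_eq_sum_ones, Nat.cast_sum]
  refine sum_congr rfl fun p hp => ?_
  rw [natCoe_apply, zeta_apply, if_neg (div_ne_zero_of_mem_primeFactors hp), Nat.cast_one]

end PrimeIndicator

noncomputable def signedCOmega : ArithmeticFunction ℝ :=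
  ⟨fun n => if n = 0 then 0 else (-1) ^ Ω n * COmega n, if_pos rfl⟩

lemma signedCOmega_apply {n : ℕ} (hn : n ≠ 0) : signedCOmega n = (-1) ^ Ω n * COmega n :=
  if_neg hn

lemma signedCOmega_div_prime {n p : ℕ} (hp : p ∈ n.primeFactors) :
    signedCOmega (n / p) = -((-1) ^ Ω n * COmega (n / p)) := by
  rw [signedCOmega_apply (div_ne_zero_of_mem_primeFactors hp), ← cardFactors_div_add_one hp,
    pow_succ]
  ring

theorem one_add_primeIndicator_mul_signedCOmega :
    (1 + primeIndicator ℝ) * signedCOmega = 1 := by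
  ext n
  rw [add_mul, one_mul, ArithmeticFunction.add_apply, primeIndicator_mul_apply]
  rcases lt_trichotomy n 1 with hn | rfl | hn
  · simp [Nat.lt_one_iff.mp hn]
  · simp [signedCOmega_apply, COmega_one]
  · rw [sum_congr rfl fun p hp => signedCOmega_div_prime hp, sum_neg_distrib, ← mul_sum,
      sum_COmega_div_prime hn, signedCOmega_apply (by omega), one_apply_ne hn.ne', add_neg_cancel]

theorem stmt_9_general (g ginv : ArithmeticFunction ℝ)
    (hg : ∀ n : ℕ, 0 < n → g n = (ArithmeticFunction.cardDistinctFactors n : ℝ) + 1)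
    (hginv : g * ginv = 1) (n : ℕ) :
    ginv n =
      ∑ d ∈ n.divisors,
        (ArithmeticFunction.moebius (n / d) : ℝ) *
          ((-1 : ℝ) ^ (ArithmeticFunction.cardFactors d) * COmega d) := by
  have hg_eq : g = ζ * (1 + primeIndicator ℝ) := by
    rw [mul_add, mul_one, ← natCoe_cardDistinctFactors]
    ext m
    rcases m.eq_zero_or_pos with rfl | hm
    · simp
    · simp [hg m hm, hm.ne', add_comm]
  have hginv_eq : ginv = μ * signedCOmega := by
    refine (left_inv_eq_right_inv ?_ hginv).symm
    rw [hg_eq, mul_mul_mul_comm, coe_moebius_mul_coe_zeta, mul_comm signedCOmega,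
      one_add_primeIndicator_mul_signedCOmega, one_mul]
  rw [hginv_eq, mul_apply,
    Nat.sum_divisorsAntidiagonal' (f := fun a b => (μ : ArithmeticFunction ℝ) a * signedCOmega b)]
  refine sum_congr rfl fun d hd => ?_
  rw [intCoe_apply, signedCOmega_apply (Nat.pos_of_mem_divisors hd).ne']

/-- Let `g` be the arithmetic function with `g(n) = ω(n) + 1` for `n ≥ 1`
and let `ginv` be its Dirichlet inverse (characterized by `g * ginv = 1`).  Then for every
positive integer `n`, `ginv(n) = ∑_{d ∣ n} μ(n/d) · λ(d) · C_Ω(d)`, where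
`λ(d) = (−1)^{Ω(d)}` is the Liouville function. -/
theorem stmt_9 (g ginv : ArithmeticFunction ℝ)
    (hg : ∀ n : ℕ, 0 < n → g n = (ArithmeticFunction.cardDistinctFactors n : ℝ) + 1)
    (hginv : g * ginv = 1) (n : ℕ) (hn : 0 < n) :
    ginv n =
      ∑ d ∈ n.divisors,
        (ArithmeticFunction.moebius (n / d) : ℝ) *
          ((-1 : ℝ) ^ (ArithmeticFunction.cardFactors d) * COmega d) :=
  stmt_9_general g ginv hg hginv n
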